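/- Let X be a Banach space whose numerical index equals 1. If the pair (X, X) has the Bishop–Phelps–Bollobás–Zizler property (BPBZp) and X has property (nu), then X has the Bishop–Phelps–Bollobás property for the numerical radius (BPBp-nu). -/

import Mathlib

/-- The numerical radius of a bounded linear operator on a normed space. -/
noncomputable def numRadius {𝕂 : Type*} [RCLike 𝕂] {Z : Type*} [NormedAddCommGroup Z]
    [NormedSpace 𝕂 Z] (T : Z →L[𝕂] Z) : ℝ :=
  sSup { r : ℝ | ∃ (z : Z) (f : Z →L[𝕂] 𝕂), ‖z‖ = 1 ∧ ‖f‖ = 1 ∧ f z = 1 ∧ r = ‖f (T z)‖ }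

/-- The numerical index of a normed space. -/
noncomputable def numIndex (𝕂 : Type*) [RCLike 𝕂] (Z : Type*) [NormedAddCommGroup Z]
    [NormedSpace 𝕂 Z] : ℝ :=
  sInf { r : ℝ | ∃ T : Z →L[𝕂] Z, ‖T‖ = 1 ∧ r = numRadius T }

/-- The Bishop–Phelps–Bollobás–Zizler property (BPBZp) for a pair of normed spaces. -/
def BPBZp (𝕂 : Type*) [RCLike 𝕂] (X Y : Type*) [NormedAddCommGroup X] [NormedSpace 𝕂 X]
    [NormedAddCommGroup Y] [NormedSpace 𝕂 Y] : Prop :=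
  ∀ ε : ℝ, 0 < ε → ∃ η : ℝ, 0 < η ∧
    ∀ (T : X →L[𝕂] Y) (x₀ : X) (y₀ : Y →L[𝕂] 𝕂),
      ‖T‖ = 1 → ‖x₀‖ = 1 → ‖y₀‖ = 1 → 1 - η < ‖y₀ (T x₀)‖ →
      ∃ (S : X →L[𝕂] Y) (x₁ : X) (y₁ : Y →L[𝕂] 𝕂),
        ‖S‖ = 1 ∧ ‖x₁‖ = 1 ∧ ‖y₁‖ = 1 ∧ ‖y₁ (S x₁)‖ = 1 ∧
        ‖x₁ - x₀‖ < ε ∧ ‖y₁ - y₀‖ < ε ∧ ‖S - T‖ < ε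

/-- Property (nu) for a normed space. -/
def PropertyNu (𝕂 : Type*) [RCLike 𝕂] (X : Type*) [NormedAddCommGroup X]
    [NormedSpace 𝕂 X] : Prop :=
  ∀ ε : ℝ, 0 < ε → ∃ η : ℝ, 0 < η ∧
    ∀ (T : X →L[𝕂] X) (x₀ : X) (f₀ : X →L[𝕂] 𝕂),
      ‖T‖ = 1 → ‖x₀‖ = 1 → ‖f₀‖ = 1 → 1 - η < RCLike.re (f₀ x₀) → ‖f₀ (T x₀)‖ = 1 →
      ∃ (S : X →L[𝕂] X) (x₁ : X) (f₁ : X →L[𝕂] 𝕂),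
        ‖S‖ = 1 ∧ ‖x₁‖ = 1 ∧ ‖f₁‖ = 1 ∧ ‖f₁ (S x₁)‖ = 1 ∧ f₁ x₁ = 1 ∧
        ‖x₁ - x₀‖ < ε ∧ ‖f₁ - f₀‖ < ε ∧ ‖S - T‖ < ε

/-- The Bishop–Phelps–Bollobás property for the numerical radius (BPBp-nu). -/
def BPBpNu (𝕂 : Type*) [RCLike 𝕂] (Z : Type*) [NormedAddCommGroup Z]
    [NormedSpace 𝕂 Z] : Prop :=
  ∀ ε : ℝ, 0 < ε → ε < 1 → ∃ η : ℝ, 0 < η ∧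
    ∀ (T : Z →L[𝕂] Z) (z₀ : Z) (f₀ : Z →L[𝕂] 𝕂),
      numRadius T = 1 → ‖z₀‖ = 1 → ‖f₀‖ = 1 → f₀ z₀ = 1 → 1 - η < ‖f₀ (T z₀)‖ →
      ∃ (S : Z →L[𝕂] Z) (z₁ : Z) (f₁ : Z →L[𝕂] 𝕂),
        ‖z₁‖ = 1 ∧ ‖f₁‖ = 1 ∧ f₁ z₁ = 1 ∧ numRadius S = 1 ∧ ‖f₁ (S z₁)‖ = 1 ∧
        ‖S - T‖ < ε ∧ ‖z₁ - z₀‖ < ε ∧ ‖f₁ - f₀‖ < ε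

/-! Given `T` with `ν(T) = 1` and `(z₀, f₀) ∈ Π(X)`, `n(X) = 1` gives `‖T‖ = 1`, so the BPBZp of
`(X, X)` yields a norm-attaining `S₁` close to `T`, attaining its norm at a pair `(x₁, y₁)` close
to `(z₀, f₀)`. Since `f₀ z₀ = 1`, `Re y₁ x₁` is close to `1`, so property (nu) moves `(x₁, y₁)` into
`Π(X)` and `S₁` to a nearby `S` attaining its norm there. As `ν = ‖·‖` when `n(X) = 1`, this `S`
attains its numerical radius `1`. -/

section

variable {𝕂 : Type*} [RCLike 𝕂] {Z : Type*} [NormedAddCommGroup Z] [NormedSpace 𝕂 Z]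

lemma norm_apply_apply_le_opNorm (T : Z →L[𝕂] Z) {z : Z} {f : Z →L[𝕂] 𝕂}
    (hz : ‖z‖ = 1) (hf : ‖f‖ = 1) : ‖f (T z)‖ ≤ ‖T‖ :=
  calc ‖f (T z)‖ ≤ ‖f‖ * ‖T z‖ := f.le_opNorm _
    _ ≤ ‖T‖ := by simpa [hf, hz] using T.le_opNorm z

lemma numRadius_nonneg (T : Z →L[𝕂] Z) : 0 ≤ numRadius T :=
  Real.sSup_nonneg (by rintro r ⟨z, f, -, -, -, rfl⟩; positivity)

lemma numRadius_le_opNorm (T : Z →L[𝕂] Z) : numRadius T ≤ ‖T‖ :=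
  Real.sSup_le (by rintro r ⟨z, f, hz, hf, -, rfl⟩; exact norm_apply_apply_le_opNorm T hz hf)
    (norm_nonneg T)

lemma norm_apply_apply_le_numRadius (T : Z →L[𝕂] Z) {z : Z} {f : Z →L[𝕂] 𝕂}
    (hz : ‖z‖ = 1) (hf : ‖f‖ = 1) (hfz : f z = 1) : ‖f (T z)‖ ≤ numRadius T :=
  le_csSup ⟨‖T‖, by rintro r ⟨w, g, hw, hg, -, rfl⟩; exact norm_apply_apply_le_opNorm T hw hg⟩
    ⟨z, f, hz, hf, hfz, rfl⟩

lemma numRadius_smul_le (a : 𝕂) (T : Z →L[𝕂] Z) :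
    numRadius (a • T) ≤ ‖a‖ * numRadius T := by
  refine Real.sSup_le ?_ (mul_nonneg (norm_nonneg a) (numRadius_nonneg T))
  rintro r ⟨z, f, hz, hf, hfz, rfl⟩
  rw [FunLike.coe_smul, Pi.smul_apply, map_smul, smul_eq_mul, norm_mul]
  exact mul_le_mul_of_nonneg_left (norm_apply_apply_le_numRadius T hz hf hfz) (norm_nonneg a)

lemma one_le_numRadius_of_numIndex_eq_one (hZ : numIndex 𝕂 Z = 1) {T : Z →L[𝕂] Z}
    (hT : ‖T‖ = 1) : 1 ≤ numRadius T :=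
  hZ ▸ csInf_le ⟨0, by rintro r ⟨S, -, rfl⟩; exact numRadius_nonneg S⟩ ⟨T, hT, rfl⟩

/-- `n(Z) = 1` only bounds `ν` on the unit sphere; homogeneity of `ν` spreads this to all `T`. -/
lemma numRadius_eq_opNorm_of_numIndex_eq_one (hZ : numIndex 𝕂 Z = 1) (T : Z →L[𝕂] Z) :
    numRadius T = ‖T‖ := by
  refine le_antisymm (numRadius_le_opNorm T) ?_
  rcases (norm_nonneg T).eq_or_lt with hT | hT
  · exact hT ▸ numRadius_nonneg T
  have hc : ‖((‖T‖⁻¹ : ℝ) : 𝕂)‖ = ‖T‖⁻¹ := by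
    rw [RCLike.norm_ofReal, abs_of_pos (inv_pos.2 hT)]
  have hnorm : ‖((‖T‖⁻¹ : ℝ) : 𝕂) • T‖ = 1 := by
    rw [norm_smul, hc, inv_mul_cancel₀ hT.ne']
  have h := (one_le_numRadius_of_numIndex_eq_one hZ hnorm).trans (numRadius_smul_le _ T)
  rw [hc, ← div_eq_inv_mul, one_le_div hT] at h
  exact h

lemma one_sub_re_apply_le {x z : Z} {f g : Z →L[𝕂] 𝕂} (hz : ‖z‖ = 1) (hg : ‖g‖ = 1)
    (hfz : f z = 1) : 1 - RCLike.re (g x) ≤ ‖x - z‖ + ‖g - f‖ :=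
  calc 1 - RCLike.re (g x) = RCLike.re (g (z - x) - (g - f) z) := by
        simp [hfz, map_sub]
    _ ≤ ‖g (z - x) - (g - f) z‖ := RCLike.re_le_norm _
    _ ≤ ‖g (z - x)‖ + ‖(g - f) z‖ := norm_sub_le _ _
    _ ≤ ‖g‖ * ‖z - x‖ + ‖g - f‖ * ‖z‖ := add_le_add (g.le_opNorm _) ((g - f).le_opNorm _)
    _ = ‖x - z‖ + ‖g - f‖ := by rw [hg, hz, norm_sub_rev]; ring

end

theorem bpbpnu_of_bpbzp_of_propertyNu_general (𝕂 : Type*) [RCLike 𝕂] (X : Type*)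
    [NormedAddCommGroup X] [NormedSpace 𝕂 X]
    (hX : numIndex 𝕂 X = 1) (h₁ : BPBZp 𝕂 X X) (h₂ : PropertyNu 𝕂 X) :
    BPBpNu 𝕂 X := by
  intro ε hε _
  obtain ⟨η₂, hη₂, H₂⟩ := h₂ (ε / 2) (by linarith)
  obtain ⟨η₁, hη₁, H₁⟩ := h₁ (min (ε / 2) (η₂ / 2)) (lt_min (by linarith) (by linarith))
  have hδε := min_le_left (ε / 2) (η₂ / 2)
  have hδη := min_le_right (ε / 2) (η₂ / 2)
  refine ⟨η₁, hη₁, fun T z₀ f₀ hνT hz₀ hf₀ hf₀z₀ hTz₀ => ?_⟩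
  rw [numRadius_eq_opNorm_of_numIndex_eq_one hX] at hνT
  obtain ⟨S₁, x₁, y₁, hS₁, hx₁, hy₁, hy₁S₁, hx₁z₀, hy₁f₀, hS₁T⟩ :=
    H₁ T z₀ f₀ hνT hz₀ hf₀ hTz₀
  have hre : 1 - η₂ < RCLike.re (y₁ x₁) := by
    linarith [one_sub_re_apply_le (x := x₁) hz₀ hy₁ hf₀z₀]
  obtain ⟨S, x₂, f₂, hS, hx₂, hf₂, hf₂S, hf₂x₂, hx₂x₁, hf₂y₁, hSS₁⟩ :=
    H₂ S₁ x₁ y₁ hS₁ hx₁ hy₁ hre hy₁S₁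
  refine ⟨S, x₂, f₂, hx₂, hf₂, hf₂x₂, numRadius_eq_opNorm_of_numIndex_eq_one hX S ▸ hS, hf₂S,
    ?_, ?_, ?_⟩
  · linarith [norm_sub_le_norm_sub_add_norm_sub S S₁ T]
  · linarith [norm_sub_le_norm_sub_add_norm_sub x₂ x₁ z₀]
  · linarith [norm_sub_le_norm_sub_add_norm_sub f₂ y₁ f₀]

/-- If `n(X) = 1`, the pair `(X, X)` has the BPBZp and `X` has property (nu), then `X` has
the BPBp-nu. -/
theorem bpbpnu_of_bpbzp_of_propertyNu (𝕂 : Type*) [RCLike 𝕂] (X : Type*)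
    [NormedAddCommGroup X] [NormedSpace 𝕂 X] [CompleteSpace X]
    (hX : numIndex 𝕂 X = 1) (h₁ : BPBZp 𝕂 X X) (h₂ : PropertyNu 𝕂 X) :
    BPBpNu 𝕂 X :=
  bpbpnu_of_bpbzp_of_propertyNu_general 𝕂 X hX h₁ h₂
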